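/- Let (X, A, Y) be jointly distributed random variables where A and Y take values in {0,1} and X takes values in a measurable space, with 0 < Pr(A = 0) < 1, and set α := Pr(A = 0). Let D_a denote the conditional distribution of X given A = a for a ∈ {0,1}. Let g be a measurable map from the X-space into a normed space Z with ∥g(x)∥ ≤ R almost surely, let C > 0, and let h : Z → ℝ be C-Lipschitz with h(g(X)) ∈ {0,1} almost surely. Define δ := | Pr(Y = 1 | A = 0) − Pr(Y = 1 | A = 1) |. Then the overall misclassification error satisfies Pr( h(g(X)) ≠ Y ) ≥ min{α, 1−α} · ( δ − C · W1(g♯D_0, g♯D_1) ) ≥ min{α, 1−α} · ( δ − 2RC · Adv(F) ), where F is the class of all measurable functions f : Z → {0,1} and Adv(F) is the adversarial advantage computed with respect to the pushforward measures g♯D_0 and g♯D_1. -/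

import Mathlib

/-!
Within a group `A = a` the events `h (g X) = 1` and `Y = 1` differ only on the error event, so the
group's error is at least `|Pr_a(Y = 1) - E_a[h (g X)]|`. By the triangle inequality the two
groups' errors add up to at least `δ - |E_0[h (g X)] - E_1[h (g X)]|`, and the law of total
probability bounds the overall error below by `min α (1 - α)` times that sum. As `h / C` is
1-Lipschitz, the gap of the means is at most `C · W1(g♯D_0, g♯D_1)`.

For the second inequality: on the ball of radius `R` a 1-Lipschitz `φ` is, up to a constant, a
`[0, 2R]`-valued function, whose integral is by the layer-cake formula an average over `t` of the
measures of `{t ≤ φ}`. Each of these is the acceptance set of a binary test, so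
`W1 ≤ 2R · Adv`.
-/

open MeasureTheory ProbabilityTheory
open scoped NNReal

/-- The Wasserstein-1 distance between two measures on a (pseudo)metric space,
via its Kantorovich dual formulation:
`W1(μ, ν) = sup over 1-Lipschitz φ : Ω → ℝ of |∫ φ dμ - ∫ φ dν|`. -/
noncomputable def W1 {Ω : Type*} [MeasurableSpace Ω] [PseudoMetricSpace Ω]
    (μ ν : Measure Ω) : ℝ :=
  ⨆ φ : {φ : Ω → ℝ // LipschitzWith 1 φ}, |∫ z, φ.1 z ∂μ - ∫ z, φ.1 z ∂ν|

/-- The adversarial advantage of the class of all measurable binary predictors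
`f : Z → {0,1}` with respect to the measures `μ0, μ1`:
`Adv = sup_f |μ1(f = 1) - μ0(f = 1)|`. -/
noncomputable def advAll {Z : Type*} [MeasurableSpace Z] (μ0 μ1 : Measure Z) : ℝ :=
  ⨆ f : {f : Z → Bool // Measurable f},
    |(μ1 {z | f.1 z = true}).toReal - (μ0 {z | f.1 z = true}).toReal|

open Set
open scoped symmDiff

section Advantage

variable {Z : Type*} [MeasurableSpace Z] (μ ν : Measure Z) [IsProbabilityMeasure μ]
  [IsProbabilityMeasure ν]

lemma abs_measureReal_sub_le_advAll {s : Set Z} (hs : MeasurableSet s) :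
    |μ.real s - ν.real s| ≤ advAll μ ν := by
  classical
  have hbdd : BddAbove (range fun f : {f : Z → Bool // Measurable f} =>
      |(ν {z | f.1 z = true}).toReal - (μ {z | f.1 z = true}).toReal|) :=
    ⟨1, forall_mem_range.2 fun _ => abs_sub_le_of_nonneg_of_le ENNReal.toReal_nonneg
      measureReal_le_one ENNReal.toReal_nonneg measureReal_le_one⟩
  have := le_ciSup hbdd ⟨fun z => decide (z ∈ s), measurable_to_countable' fun b => by
    cases b <;> simp [hs, hs.compl, preimage, ← compl_def]⟩
  rw [abs_sub_comm]
  simpa [advAll, measureReal_def] using this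

lemma abs_integral_sub_le_mul_advAll {ψ : Z → ℝ} {M : ℝ} (hψ : Measurable ψ)
    (hψM : ∀ z, ψ z ∈ Icc 0 M) :
    |∫ z, ψ z ∂μ - ∫ z, ψ z ∂ν| ≤ M * advAll μ ν := by
  have : Nonempty Z := nonempty_of_isProbabilityMeasure μ
  have hM : 0 ≤ M := (hψM (Classical.arbitrary Z)).1.trans (hψM _).2
  have layer_cake : ∀ (m : Measure Z) [IsProbabilityMeasure m],
      ∫ z, ψ z ∂m = ∫ t in Ioc 0 M, m.real {z | t ≤ ψ z} := fun m _ =>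
    Integrable.integral_eq_integral_Ioc_meas_le
      (.of_bound hψ.aestronglyMeasurable M (ae_of_all _ fun z => by
        rw [Real.norm_of_nonneg (hψM z).1]; exact (hψM z).2))
      (ae_of_all _ fun z => (hψM z).1) (ae_of_all _ fun z => (hψM z).2)
  have hint : ∀ (m : Measure Z) [IsProbabilityMeasure m],
      IntegrableOn (fun t => m.real {z | t ≤ ψ z}) (Ioc 0 M) := by
    intro m _
    have hanti : Antitone fun t => m.real {z | t ≤ ψ z} := fun s t hst =>
      measureReal_mono fun z (hz : t ≤ ψ z) => hst.trans hz
    refine Measure.integrableOn_of_bounded (M := 1) measure_Ioc_lt_top.ne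
      hanti.measurable.aestronglyMeasurable (ae_of_all _ fun t => ?_)
    rw [Real.norm_of_nonneg measureReal_nonneg]
    exact measureReal_le_one
  rw [layer_cake μ, layer_cake ν, ← integral_sub (hint μ) (hint ν), ← Real.norm_eq_abs]
  calc _ ≤ advAll μ ν * volume.real (Ioc 0 M) :=
        norm_setIntegral_le_of_norm_le_const measure_Ioc_lt_top fun t _ =>
          abs_measureReal_sub_le_advAll μ ν (measurableSet_le measurable_const hψ)
    _ = M * advAll μ ν := by rw [Real.volume_real_Ioc_of_le hM, sub_zero, mul_comm]

end Advantage

section Wasserstein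

variable {Z : Type*} [NormedAddCommGroup Z] [MeasurableSpace Z] [BorelSpace Z]
  {μ ν : Measure Z} [IsProbabilityMeasure μ] [IsProbabilityMeasure ν] {R : ℝ}

lemma abs_integral_sub_le_two_mul_advAll (hμ : ∀ᵐ z ∂μ, ‖z‖ ≤ R) (hν : ∀ᵐ z ∂ν, ‖z‖ ≤ R)
    {φ : Z → ℝ} (hφ : LipschitzWith 1 φ) :
    |∫ z, φ z ∂μ - ∫ z, φ z ∂ν| ≤ 2 * R * advAll μ ν := by
  obtain ⟨z₀, hz₀⟩ := hμ.exists
  have hR : 0 ≤ R := (norm_nonneg z₀).trans hz₀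
  set ψ : Z → ℝ := fun z => max 0 (min (φ z - φ 0 + R) (2 * R))
  have hψ : Measurable ψ := by
    have := hφ.continuous
    fun_prop
  have hψ_mem : ∀ z, ψ z ∈ Icc 0 (2 * R) := fun z =>
    ⟨le_max_left _ _, max_le (by linarith) (min_le_right _ _)⟩
  have hψ_eq : ∀ z, ‖z‖ ≤ R → ψ z + (φ 0 - R) = φ z := fun z hz => by
    have := (abs_le.1 ((Real.dist_eq _ _ ▸ hφ.dist_le_mul z 0).trans (by simpa using hz)))
    simp only [ψ]
    rw [min_eq_left (by linarith), max_eq_right (by linarith)]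
    ring
  have hshift : ∀ (m : Measure Z) [IsProbabilityMeasure m], (∀ᵐ z ∂m, ‖z‖ ≤ R) →
      ∫ z, φ z ∂m = ∫ z, ψ z ∂m + (φ 0 - R) := fun m _ hm => by
    have hψ_int : Integrable ψ m := .of_bound hψ.aestronglyMeasurable (2 * R)
      (ae_of_all _ fun z => by rw [Real.norm_of_nonneg (hψ_mem z).1]; exact (hψ_mem z).2)
    rw [← integral_congr_ae (hm.mono hψ_eq), integral_add hψ_int (integrable_const _),
      integral_const, probReal_univ, one_smul]
  rw [hshift μ hμ, hshift ν hν, add_sub_add_right_eq_sub]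
  exact abs_integral_sub_le_mul_advAll μ ν hψ hψ_mem

lemma W1_le_two_mul_advAll (hμ : ∀ᵐ z ∂μ, ‖z‖ ≤ R) (hν : ∀ᵐ z ∂ν, ‖z‖ ≤ R) :
    W1 μ ν ≤ 2 * R * advAll μ ν :=
  have : Nonempty {φ : Z → ℝ // LipschitzWith 1 φ} := ⟨⟨_, LipschitzWith.const' 0⟩⟩
  ciSup_le fun φ => abs_integral_sub_le_two_mul_advAll hμ hν φ.2

lemma abs_integral_sub_le_mul_W1 (hμ : ∀ᵐ z ∂μ, ‖z‖ ≤ R) (hν : ∀ᵐ z ∂ν, ‖z‖ ≤ R)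
    {C : ℝ≥0} {h : Z → ℝ} (hh : LipschitzWith C h) :
    |∫ z, h z ∂μ - ∫ z, h z ∂ν| ≤ C * W1 μ ν := by
  obtain rfl | hC := eq_or_ne C 0
  · have hconst : h = fun _ => h 0 := funext fun z => (LipschitzWith.zero_iff h).1 hh z 0
    rw [hconst]
    simp
  have hC' : (0 : ℝ) < C := by positivity
  have hbdd : BddAbove (range fun φ : {φ : Z → ℝ // LipschitzWith 1 φ} =>
      |∫ z, φ.1 z ∂μ - ∫ z, φ.1 z ∂ν|) :=
    ⟨_, forall_mem_range.2 fun φ => abs_integral_sub_le_two_mul_advAll hμ hν φ.2⟩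
  have hφ : LipschitzWith 1 fun z => (C : ℝ)⁻¹ * h z := .of_dist_le_mul fun x y => by
    rw [Real.dist_eq, ← mul_sub, abs_mul, abs_inv, NNReal.abs_eq, NNReal.coe_one, one_mul,
      inv_mul_le_iff₀ hC', ← Real.dist_eq]
    exact hh.dist_le_mul x y
  calc |∫ z, h z ∂μ - ∫ z, h z ∂ν|
      = C * |∫ z, (C : ℝ)⁻¹ * h z ∂μ - ∫ z, (C : ℝ)⁻¹ * h z ∂ν| := by
        rw [integral_const_mul, integral_const_mul, ← mul_sub, abs_mul, abs_inv, NNReal.abs_eq,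
          mul_inv_cancel_left₀ hC'.ne']
    _ ≤ C * W1 μ ν := mul_le_mul_of_nonneg_left (le_ciSup hbdd ⟨_, hφ⟩) C.2

end Wasserstein

section Error

variable {Ω : Type*} [MeasurableSpace Ω]

lemma abs_measureReal_sub_le_of_symmDiff_subset (μ : Measure Ω) [IsFiniteMeasure μ]
    {s t u : Set Ω} (h : s ∆ t ⊆ u) : |μ.real s - μ.real t| ≤ μ.real u :=
  abs_sub_le_iff.2
    ⟨(le_measureReal_sdiff).trans (measureReal_mono (subset_union_left.trans h)),
      (le_measureReal_sdiff).trans (measureReal_mono (subset_union_right.trans h))⟩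

lemma min_mul_sub_le_measureReal_of_symmDiff_subset (P : Measure Ω) [IsFiniteMeasure P]
    {S E F D : Set Ω} (hS : MeasurableSet S) (hD : E ∆ F ⊆ D) :
    min (P.real S) (P.real Sᶜ) *
        (|(P[|S]).real F - (P[|Sᶜ]).real F| - |(P[|S]).real E - (P[|Sᶜ]).real E|) ≤
      P.real D := by
  have hD' : F ∆ E ⊆ D := symmDiff_comm E F ▸ hD
  have h₀ := abs_measureReal_sub_le_of_symmDiff_subset (P[|S]) hD'
  have h₁ := abs_measureReal_sub_le_of_symmDiff_subset (P[|Sᶜ]) hD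
  have htotal : P.real D = (P[|S]).real D * P.real S + (P[|Sᶜ]).real D * P.real Sᶜ := by
    simp only [measureReal_def]
    rw [← cond_add_cond_compl_eq hS P, ENNReal.toReal_add (by finiteness) (by finiteness),
      ENNReal.toReal_mul, ENNReal.toReal_mul]
  have hmin : 0 ≤ min (P.real S) (P.real Sᶜ) := le_min measureReal_nonneg measureReal_nonneg
  calc _ ≤ min (P.real S) (P.real Sᶜ) * ((P[|S]).real D + (P[|Sᶜ]).real D) := by
        refine mul_le_mul_of_nonneg_left ?_ hmin
        linarith [abs_sub_le ((P[|S]).real F) ((P[|S]).real E) ((P[|Sᶜ]).real F),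
          abs_sub_le ((P[|S]).real E) ((P[|Sᶜ]).real E) ((P[|Sᶜ]).real F)]
    _ ≤ P.real D := by
        rw [htotal]
        nlinarith [min_le_left (P.real S) (P.real Sᶜ), min_le_right (P.real S) (P.real Sᶜ),
          measureReal_nonneg (μ := P[|S]) (s := D), measureReal_nonneg (μ := P[|Sᶜ]) (s := D)]

lemma integral_eq_measureReal_of_ae_eq_zero_or_one {μ : Measure Ω} {f : Ω → ℝ}
    (hf : Measurable f) (h01 : ∀ᵐ ω ∂μ, f ω = 0 ∨ f ω = 1) :
    ∫ ω, f ω ∂μ = μ.real {ω | f ω = 1} := by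
  rw [← integral_indicator_one (s := {ω | f ω = 1}) (hf (measurableSet_singleton 1))]
  refine integral_congr_ae (h01.mono fun ω hω => ?_)
  rcases hω with hω | hω <;> simp [hω, indicator]

end Error

theorem overall_error_lower_bound_general {Ω 𝒳 Z : Type*} [MeasurableSpace Ω] [MeasurableSpace 𝒳]
    [NormedAddCommGroup Z] [MeasurableSpace Z] [BorelSpace Z]
    (P : Measure Ω) [IsProbabilityMeasure P]
    (X : Ω → 𝒳) (A : Ω → Bool) (Y : Ω → Bool)
    (hX : Measurable X) (hA : Measurable A)
    (g : 𝒳 → Z) (hg : Measurable g) (R : ℝ)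
    (hR : ∀ᵐ ω ∂P, ‖g (X ω)‖ ≤ R)
    (C : ℝ≥0) (h : Z → ℝ) (hh : LipschitzWith C h)
    (hh01 : ∀ᵐ ω ∂P, h (g (X ω)) = 0 ∨ h (g (X ω)) = 1) :
    (P {ω | h (g (X ω)) ≠ (if Y ω then (1 : ℝ) else 0)}).toReal ≥
      min (P (A ⁻¹' {false})).toReal (1 - (P (A ⁻¹' {false})).toReal) *
        (|((P[|A ⁻¹' {false}]) (Y ⁻¹' {true})).toReal -
            ((P[|A ⁻¹' {true}]) (Y ⁻¹' {true})).toReal| -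
          (C : ℝ) * W1 (((P[|A ⁻¹' {false}]).map X).map g) (((P[|A ⁻¹' {true}]).map X).map g))
    ∧
    min (P (A ⁻¹' {false})).toReal (1 - (P (A ⁻¹' {false})).toReal) *
        (|((P[|A ⁻¹' {false}]) (Y ⁻¹' {true})).toReal -
            ((P[|A ⁻¹' {true}]) (Y ⁻¹' {true})).toReal| -
          (C : ℝ) * W1 (((P[|A ⁻¹' {false}]).map X).map g) (((P[|A ⁻¹' {true}]).map X).map g)) ≥
      min (P (A ⁻¹' {false})).toReal (1 - (P (A ⁻¹' {false})).toReal) *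
        (|((P[|A ⁻¹' {false}]) (Y ⁻¹' {true})).toReal -
            ((P[|A ⁻¹' {true}]) (Y ⁻¹' {true})).toReal| -
          2 * R * (C : ℝ) *
            advAll (((P[|A ⁻¹' {false}]).map X).map g) (((P[|A ⁻¹' {true}]).map X).map g)) := by
  simp only [← measureReal_def, Measure.map_map hg hX]
  set S := A ⁻¹' {false}
  have hS : MeasurableSet S := hA (measurableSet_singleton false)
  rw [show A ⁻¹' {true} = Sᶜ by ext; simp [S], ← probReal_compl_eq_one_sub hS]
  have hgX : Measurable (g ∘ X) := hg.comp hX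
  have hmin : 0 ≤ min (P.real S) (P.real Sᶜ) := le_min measureReal_nonneg measureReal_nonneg
  by_cases hdeg : P S = 0 ∨ P Sᶜ = 0
  · have : min (P.real S) (P.real Sᶜ) = 0 := by
      rcases hdeg with h0 | h0 <;> simp [measureReal_def, h0]
    simp [this, measureReal_nonneg]
  have := cond_isProbabilityMeasure (not_or.1 hdeg).1
  have := cond_isProbabilityMeasure (not_or.1 hdeg).2
  have := Measure.isProbabilityMeasure_map (μ := P[|S]) hgX.aemeasurable
  have := Measure.isProbabilityMeasure_map (μ := P[|Sᶜ]) hgX.aemeasurable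
  have hbound : ∀ T, ∀ᵐ z ∂(P[|T]).map (g ∘ X), ‖z‖ ≤ R := fun T =>
    (ae_map_iff hgX.aemeasurable (measurableSet_le measurable_norm measurable_const)).2
      (cond_absolutelyContinuous.ae_le hR)
  have hmean : ∀ T, ∫ z, h z ∂(P[|T]).map (g ∘ X) = (P[|T]).real {ω | h (g (X ω)) = 1} :=
    fun T => by
      rw [integral_map hgX.aemeasurable hh.continuous.aestronglyMeasurable]
      exact integral_eq_measureReal_of_ae_eq_zero_or_one (hh.continuous.measurable.comp hgX)
        (cond_absolutelyContinuous.ae_le hh01)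
  have hW := abs_integral_sub_le_mul_W1 (hbound S) (hbound Sᶜ) hh
  rw [hmean, hmean] at hW
  have herr := min_mul_sub_le_measureReal_of_symmDiff_subset P hS
    (E := {ω | h (g (X ω)) = 1}) (F := Y ⁻¹' {true}) (D := {ω | h (g (X ω)) ≠ if Y ω then 1 else 0})
    (by rintro ω (⟨hE, hF⟩ | ⟨hF, hE⟩) <;> simp_all)
  refine ⟨herr.trans' (mul_le_mul_of_nonneg_left (by linarith) hmin),
    mul_le_mul_of_nonneg_left (sub_le_sub_left ?_ _) hmin⟩
  exact (mul_le_mul_of_nonneg_left (W1_le_two_mul_advAll (hbound S) (hbound Sᶜ))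
    C.coe_nonneg).trans_eq (by ring)

/-- (Corollary 3.3 of the paper.) In the setting of the accuracy /
obfuscation trade-off theorem, with `α = Pr(A = 0)`, the overall misclassification
error satisfies
`Pr(h(g(X)) ≠ Y) ≥ min{α, 1-α}·(δ - C·W1(g♯D_0, g♯D_1))
                 ≥ min{α, 1-α}·(δ - 2RC·Adv(F_A))`. -/
theorem overall_error_lower_bound {Ω 𝒳 Z : Type*} [MeasurableSpace Ω] [MeasurableSpace 𝒳]
    [NormedAddCommGroup Z] [MeasurableSpace Z] [BorelSpace Z]
    (P : Measure Ω) [IsProbabilityMeasure P]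
    (X : Ω → 𝒳) (A : Ω → Bool) (Y : Ω → Bool)
    (hX : Measurable X) (hA : Measurable A) (hY : Measurable Y)
    (hA0 : 0 < P (A ⁻¹' {false})) (hA1 : P (A ⁻¹' {false}) < 1)
    (g : 𝒳 → Z) (hg : Measurable g) (R : ℝ)
    (hR : ∀ᵐ ω ∂P, ‖g (X ω)‖ ≤ R)
    (C : ℝ≥0) (hC : 0 < C) (h : Z → ℝ) (hh : LipschitzWith C h)
    (hh01 : ∀ᵐ ω ∂P, h (g (X ω)) = 0 ∨ h (g (X ω)) = 1) :
    (P {ω | h (g (X ω)) ≠ (if Y ω then (1 : ℝ) else 0)}).toReal ≥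
      min (P (A ⁻¹' {false})).toReal (1 - (P (A ⁻¹' {false})).toReal) *
        (|((P[|A ⁻¹' {false}]) (Y ⁻¹' {true})).toReal -
            ((P[|A ⁻¹' {true}]) (Y ⁻¹' {true})).toReal| -
          (C : ℝ) * W1 (((P[|A ⁻¹' {false}]).map X).map g) (((P[|A ⁻¹' {true}]).map X).map g))
    ∧
    min (P (A ⁻¹' {false})).toReal (1 - (P (A ⁻¹' {false})).toReal) *
        (|((P[|A ⁻¹' {false}]) (Y ⁻¹' {true})).toReal -
            ((P[|A ⁻¹' {true}]) (Y ⁻¹' {true})).toReal| -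
          (C : ℝ) * W1 (((P[|A ⁻¹' {false}]).map X).map g) (((P[|A ⁻¹' {true}]).map X).map g)) ≥
      min (P (A ⁻¹' {false})).toReal (1 - (P (A ⁻¹' {false})).toReal) *
        (|((P[|A ⁻¹' {false}]) (Y ⁻¹' {true})).toReal -
            ((P[|A ⁻¹' {true}]) (Y ⁻¹' {true})).toReal| -
          2 * R * (C : ℝ) *
            advAll (((P[|A ⁻¹' {false}]).map X).map g) (((P[|A ⁻¹' {true}]).map X).map g)) :=
  overall_error_lower_bound_general P X A Y hX hA g hg R hR C h hh hh01
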